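/- arXiv:math-ph/0309028 — 2 statements merged into one kernel-verified Lean document; each statement's English description precedes it below -/
import Mathlib

section
/- Suppose h is measurable on (0,b), b < ∞, and there is a constant c > 0 such that |h(y)| ≤ c∫_{2y}^b |h(x)| dx + c∫_y^b |h(x)| dx for all y ∈ (0,b). Then h = 0 a.e. on (0,b). -/
/-!
Put `g = |h|` and `F t = ∫_t^b g`. Since `F` is antitone, the hypothesis gives `g ≤ 2c F` on
`(0,b)`. If `F t = 0` and `s < t` is so close to `t` that `2c (t - s) < 1`, then
`F s = ∫_s^t g ≤ 2c (t - s) F s`, hence `F s = 0`. Starting from `F b = 0` and walking left in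
steps of fixed length, `F 0 = 0`, so `g = 0` a.e. on `(0,b)`.
-/

open MeasureTheory Set

section TailIntegral

variable {g : ℝ → ℝ} {a b K : ℝ}

theorem setIntegral_Ioc_mono_left_of_nonneg (hg : 0 ≤ g) (hint : IntegrableOn g (Ioc a b))
    {s t : ℝ} (has : a ≤ s) (hst : s ≤ t) :
    ∫ x in Ioc t b, g x ≤ ∫ x in Ioc s b, g x :=
  setIntegral_mono_set (hint.mono_set (Ioc_subset_Ioc_left has)) (.of_forall hg)
    (Ioc_subset_Ioc_left hst).eventuallyLE

variable (hK : 0 ≤ K) (hg : 0 ≤ g) (hint : IntegrableOn g (Ioc a b))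
  (hle : ∀ t ∈ Ioo a b, g t ≤ K * ∫ x in Ioc t b, g x)
include hK hg hint hle

theorem setIntegral_Ioc_eq_zero_of_mul_sub_lt_one {s t : ℝ} (has : a ≤ s) (hst : s ≤ t)
    (htb : t ≤ b) (hKst : K * (t - s) < 1) (ht : ∫ x in Ioc t b, g x = 0) :
    ∫ x in Ioc s b, g x = 0 := by
  set F := ∫ x in Ioc s b, g x
  have hF : 0 ≤ F := setIntegral_nonneg measurableSet_Ioc fun x _ => hg x
  have hsplit : F = ∫ x in Ioo s t, g x := by
    rw [← integral_Ioc_eq_integral_Ioo, ← add_zero (∫ x in Ioc s t, g x), ← ht,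
      ← setIntegral_union (Ioc_disjoint_Ioc_of_le le_rfl) measurableSet_Ioc
        (hint.mono_set (Ioc_subset_Ioc has htb))
        (hint.mono_set (Ioc_subset_Ioc_left (has.trans hst))),
      Ioc_union_Ioc_eq_Ioc hst htb]
  have hbound : ∫ x in Ioo s t, g x ≤ K * (t - s) * F :=
    calc ∫ x in Ioo s t, g x ≤ ∫ _ in Ioo s t, K * F := by
          refine setIntegral_mono_on ((hint.mono_set (Ioc_subset_Ioc has htb)).mono_set
            Ioo_subset_Ioc_self) (integrableOn_const measure_Ioo_lt_top.ne) measurableSet_Ioo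
            fun x hx => ?_
          calc g x ≤ K * ∫ y in Ioc x b, g y :=
                hle x ⟨has.trans_lt hx.1, hx.2.trans_le htb⟩
            _ ≤ K * F := by
                gcongr
                exact setIntegral_Ioc_mono_left_of_nonneg hg hint has hx.1.le
      _ = K * (t - s) * F := by
          rw [setIntegral_const, Real.volume_real_Ioo_of_le hst, smul_eq_mul]
          ring
  nlinarith

theorem setIntegral_Ioc_eq_zero_of_sub_nat_div_le (k : ℕ) {s : ℝ} (has : a ≤ s) (hsb : s ≤ b)
    (hk : b - k / (K + 1) ≤ s) : ∫ x in Ioc s b, g x = 0 := by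
  induction k generalizing s with
  | zero =>
    rw [le_antisymm hsb (by simpa using hk), Ioc_self, Measure.restrict_empty, integral_zero_measure]
  | succ k ih =>
    set t := max s (b - k / (K + 1))
    have hts : t - s ≤ 1 / (K + 1) := by
      rw [sub_le_iff_le_add']
      refine max_le (le_add_of_nonneg_right (by positivity)) ?_
      push_cast at hk
      rw [add_div] at hk
      linarith
    have hKts : K * (t - s) < 1 :=
      calc K * (t - s) ≤ K * (1 / (K + 1)) := by gcongr
        _ < 1 := by rw [mul_one_div, div_lt_one (by positivity)]; linarith
    have htb : t ≤ b := max_le hsb (sub_le_self b (by positivity))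
    exact setIntegral_Ioc_eq_zero_of_mul_sub_lt_one hK hg hint hle has (le_max_left _ _) htb hKts
      (ih (has.trans (le_max_left _ _)) htb (le_max_right _ _))

theorem ae_eq_zero_of_le_mul_setIntegral_Ioc (hab : a ≤ b) :
    ∀ᵐ x ∂volume.restrict (Ioc a b), g x = 0 := by
  obtain ⟨k, hk⟩ := exists_nat_ge ((b - a) * (K + 1))
  have hbk : b - k / (K + 1) ≤ a := by
    rw [sub_le_comm, le_div_iff₀ (by positivity)]
    exact hk
  have h0 := setIntegral_Ioc_eq_zero_of_sub_nat_div_le hK hg hint hle k le_rfl hab hbk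
  exact (integral_eq_zero_iff_of_nonneg_ae (.of_forall hg) hint).mp h0

end TailIntegral

/-- If `h` is integrable on `(0,b)`, `b < ∞`, and there is `c > 0` with
`|h(y)| ≤ c ∫_{2y}^b |h| + c ∫_y^b |h|` for all `y ∈ (0,b)`, then `h = 0` a.e. on `(0,b)`. -/
theorem stmt_3 (b c : ℝ) (hb : 0 < b) (hc : 0 < c) (h : ℝ → ℝ)
    (hint : IntegrableOn h (Set.Ioo 0 b))
    (hineq : ∀ y ∈ Set.Ioo (0:ℝ) b,
      |h y| ≤ c * (∫ x in Set.Ioc (2*y) b, |h x|) + c * (∫ x in Set.Ioc y b, |h x|)) :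
    ∀ᵐ y ∂(volume.restrict (Set.Ioo (0:ℝ) b)), h y = 0 := by
  have habs_nonneg : 0 ≤ fun x => |h x| := fun x => abs_nonneg (h x)
  have habs_int : IntegrableOn (fun x => |h x|) (Ioc 0 b) :=
    (integrableOn_Ioc_iff_integrableOn_Ioo).mpr hint.abs
  have hle : ∀ y ∈ Ioo 0 b, |h y| ≤ 2 * c * ∫ x in Ioc y b, |h x| := fun y hy =>
    calc |h y| ≤ c * (∫ x in Ioc (2 * y) b, |h x|) + c * ∫ x in Ioc y b, |h x| := hineq y hy
      _ ≤ c * (∫ x in Ioc y b, |h x|) + c * ∫ x in Ioc y b, |h x| := by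
          have hdouble := setIntegral_Ioc_mono_left_of_nonneg habs_nonneg habs_int hy.1.le
            (by linarith [hy.1] : y ≤ 2 * y)
          gcongr
      _ = 2 * c * ∫ x in Ioc y b, |h x| := by ring
  have hzero := ae_eq_zero_of_le_mul_setIntegral_Ioc (by positivity) habs_nonneg habs_int hle hb.le
  filter_upwards [ae_restrict_of_ae_restrict_of_subset Ioo_subset_Ioc_self hzero] with y hy
  exact abs_eq_zero.mp hy
end

section
/- Let q ∈ L²(0,∞) be real-valued with compact support whose supremum is a > 0, and suppose q does not change sign on some interval (a₁, a] with a₁ < a. Then a = lim_{m→∞} |∫₀^∞ q(r) r^m dr|^{1/m} (limit over positive integers m). -/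
/-!
The moments `M_m = ∫₀^a q(r) rᵐ dr` satisfy `|M_m| ≤ aᵐ ∫₀^a |q|`, which gives the upper bound.
For the lower bound, take `0 < b₀ < b₁ < a` inside the interval where (say) `q ≥ 0`: the part of
`M_m` over `(b₀, a]` is at least `b₁ᵐ ∫_{b₁}^a q`, where `∫_{b₁}^a q > 0` because the support of `q`
reaches up to `a`, while the part over `(0, b₀]` is at most `b₀ᵐ ∫₀^a |q| = o(b₁ᵐ)`.
Taking `m`-th roots, `b₁ ≤ liminf |M_m|^{1/m} ≤ limsup |M_m|^{1/m} ≤ a`, and `b₁` may be taken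
arbitrarily close to `a`.
-/

open MeasureTheory Filter Set Topology

lemma tendsto_rpow_one_div_nat_nhds_one {C : ℝ} (hC : 0 < C) :
    Tendsto (fun m : ℕ => C ^ ((1 : ℝ) / m)) atTop (𝓝 1) := by
  simpa [Function.comp_def] using ((Real.continuousAt_const_rpow hC.ne' (b := 0)).tendsto).comp
    tendsto_one_div_atTop_nhds_zero_nat

lemma pow_mul_rpow_one_div {x C : ℝ} (hx : 0 ≤ x) (hC : 0 ≤ C) {m : ℕ} (hm : m ≠ 0) :
    (x ^ m * C) ^ ((1 : ℝ) / m) = x * C ^ ((1 : ℝ) / m) := by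
  rw [Real.mul_rpow (pow_nonneg hx m) hC, ← Real.rpow_natCast x m, ← Real.rpow_mul hx,
    mul_one_div_cancel (Nat.cast_ne_zero.mpr hm), Real.rpow_one]

lemma eventually_lt_rpow_one_div {x : ℕ → ℝ} {b c b' : ℝ} (hb : 0 ≤ b) (hc : 0 < c)
    (hb' : b' < b) (h : ∀ᶠ m in atTop, b ^ m * c ≤ x m) :
    ∀ᶠ m : ℕ in atTop, b' < x m ^ ((1 : ℝ) / m) := by
  have hlim : Tendsto (fun m : ℕ => b * c ^ ((1 : ℝ) / m)) atTop (𝓝 b) := by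
    simpa using (tendsto_rpow_one_div_nat_nhds_one hc).const_mul b
  filter_upwards [hlim.eventually_const_lt hb', h, eventually_ne_atTop 0] with m hlt hle hm
  calc b' < b * c ^ ((1 : ℝ) / m) := hlt
    _ = (b ^ m * c) ^ ((1 : ℝ) / m) := (pow_mul_rpow_one_div hb hc.le hm).symm
    _ ≤ x m ^ ((1 : ℝ) / m) := by gcongr

lemma eventually_rpow_one_div_lt {x : ℕ → ℝ} {a C a' : ℝ} (ha : 0 ≤ a) (ha' : a < a')
    (hx : ∀ m, 0 ≤ x m) (h : ∀ m, x m ≤ a ^ m * C) :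
    ∀ᶠ m : ℕ in atTop, x m ^ ((1 : ℝ) / m) < a' := by
  have hC : 0 < max C 1 := lt_max_of_lt_right one_pos
  have hlim : Tendsto (fun m : ℕ => a * max C 1 ^ ((1 : ℝ) / m)) atTop (𝓝 a) := by
    simpa using (tendsto_rpow_one_div_nat_nhds_one hC).const_mul a
  filter_upwards [hlim.eventually_lt_const ha', eventually_ne_atTop 0] with m hlt hm
  calc x m ^ ((1 : ℝ) / m) ≤ (a ^ m * max C 1) ^ ((1 : ℝ) / m) := by
        gcongr
        · exact hx m
        · exact (h m).trans (by gcongr; exact le_max_left _ _)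
    _ = a * max C 1 ^ ((1 : ℝ) / m) := pow_mul_rpow_one_div ha hC.le hm
    _ < a' := hlt

lemma eventually_mul_pow_le_mul_pow {b₀ b₁ : ℝ} (hb₀ : 0 ≤ b₀) (hb : b₀ < b₁) (C : ℝ) {c : ℝ}
    (hc : 0 < c) : ∀ᶠ m : ℕ in atTop, C * b₀ ^ m ≤ c * b₁ ^ m := by
  filter_upwards [((isLittleO_pow_pow_of_lt_left hb₀ hb).const_mul_left C).bound hc] with m hm
  calc C * b₀ ^ m ≤ ‖C * b₀ ^ m‖ := Real.le_norm_self _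
    _ ≤ c * ‖b₁ ^ m‖ := hm
    _ = c * b₁ ^ m := by rw [Real.norm_of_nonneg (pow_nonneg (hb₀.trans hb.le) m)]

section Moments

variable {f : ℝ → ℝ} {s : Set ℝ} {b : ℝ}

lemma integrableOn_mul_pow_of_abs_le (hf : IntegrableOn f s) (hs : MeasurableSet s)
    (hsb : ∀ r ∈ s, |r| ≤ b) (m : ℕ) : IntegrableOn (fun r => f r * r ^ m) s := by
  refine hf.mul_bdd (continuous_pow m).aestronglyMeasurable (c := b ^ m) ?_
  filter_upwards [ae_restrict_mem hs] with r hr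
  rw [norm_pow, Real.norm_eq_abs]
  exact pow_le_pow_left₀ (abs_nonneg r) (hsb r hr) m

lemma abs_setIntegral_mul_pow_le (hf : IntegrableOn f s) (hs : MeasurableSet s)
    (hsb : ∀ r ∈ s, |r| ≤ b) (m : ℕ) :
    |∫ r in s, f r * r ^ m| ≤ b ^ m * ∫ r in s, |f r| := by
  calc |∫ r in s, f r * r ^ m| ≤ ∫ r in s, |f r * r ^ m| := abs_integral_le_integral_abs
    _ ≤ ∫ r in s, |f r| * b ^ m := by
        refine setIntegral_mono_on (integrableOn_mul_pow_of_abs_le hf hs hsb m).abs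
          (hf.abs.mul_const _) hs fun r hr => ?_
        rw [abs_mul, abs_pow]
        exact mul_le_mul_of_nonneg_left (pow_le_pow_left₀ (abs_nonneg r) (hsb r hr) m)
          (abs_nonneg _)
    _ = b ^ m * ∫ r in s, |f r| := by rw [integral_mul_const, mul_comm]

lemma pow_mul_setIntegral_le_setIntegral_mul_pow {m : ℕ}
    (hfm : IntegrableOn (fun r => f r * r ^ m) s) (hf : IntegrableOn f s) (hs : MeasurableSet s)
    (hb : 0 ≤ b) (hbs : ∀ r ∈ s, b ≤ r) (hpos : ∀ r ∈ s, 0 ≤ f r) :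
    b ^ m * ∫ r in s, f r ≤ ∫ r in s, f r * r ^ m := by
  rw [← integral_const_mul]
  refine setIntegral_mono_on (hf.const_mul _) hfm hs fun r hr => ?_
  rw [mul_comm]
  exact mul_le_mul_of_nonneg_left (pow_le_pow_left₀ hb (hbs r hr) m) (hpos r hr)

lemma pow_mul_sub_le_setIntegral_Ioc_mul_pow {a b₀ b₁ : ℝ} (hf : IntegrableOn f (Ioc 0 a))
    (hb₀ : 0 ≤ b₀) (hb : b₀ ≤ b₁) (hb₁ : b₁ ≤ a) (hpos : ∀ r ∈ Ioc b₀ a, 0 ≤ f r) (m : ℕ) :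
    b₁ ^ m * (∫ r in Ioc b₁ a, f r) - b₀ ^ m * (∫ r in Ioc 0 a, |f r|)
      ≤ ∫ r in Ioc 0 a, f r * r ^ m := by
  have habs : ∀ r ∈ Ioc (0 : ℝ) a, |r| ≤ a := fun r hr => (abs_of_pos hr.1).le.trans hr.2
  have hfm := integrableOn_mul_pow_of_abs_le hf measurableSet_Ioc habs m
  have hb₀a : b₀ ≤ a := hb.trans hb₁
  have hlow : -(b₀ ^ m * ∫ r in Ioc 0 a, |f r|) ≤ ∫ r in Ioc 0 b₀, f r * r ^ m := by
    have hsub : Ioc 0 b₀ ⊆ Ioc 0 a := Ioc_subset_Ioc_right hb₀a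
    refine neg_le_of_abs_le ((abs_setIntegral_mul_pow_le (hf.mono_set hsub) measurableSet_Ioc
      (fun r hr => (abs_of_pos hr.1).le.trans hr.2) m).trans ?_)
    exact mul_le_mul_of_nonneg_left
      (setIntegral_mono_set hf.abs (.of_forall fun r => abs_nonneg _) hsub.eventuallyLE)
      (pow_nonneg hb₀ m)
  have hhigh : b₁ ^ m * (∫ r in Ioc b₁ a, f r) ≤ ∫ r in Ioc b₀ a, f r * r ^ m := by
    have hsub : Ioc b₁ a ⊆ Ioc 0 a := Ioc_subset_Ioc_left (hb₀.trans hb)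
    calc b₁ ^ m * (∫ r in Ioc b₁ a, f r) ≤ ∫ r in Ioc b₁ a, f r * r ^ m :=
          pow_mul_setIntegral_le_setIntegral_mul_pow (hfm.mono_set hsub) (hf.mono_set hsub)
            measurableSet_Ioc (hb₀.trans hb) (fun r hr => hr.1.le)
            (fun r hr => hpos r ⟨hb.trans_lt hr.1, hr.2⟩)
      _ ≤ ∫ r in Ioc b₀ a, f r * r ^ m := by
          refine setIntegral_mono_set (hfm.mono_set (Ioc_subset_Ioc_left hb₀)) ?_
            (Ioc_subset_Ioc_left hb).eventuallyLE
          filter_upwards [ae_restrict_mem measurableSet_Ioc] with r hr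
          exact mul_nonneg (hpos r hr) (pow_nonneg (hb₀.trans hr.1.le) m)
  have hsplit : ∫ r in Ioc 0 a, f r * r ^ m
      = (∫ r in Ioc 0 b₀, f r * r ^ m) + ∫ r in Ioc b₀ a, f r * r ^ m := by
    rw [← Ioc_union_Ioc_eq_Ioc hb₀ hb₀a, setIntegral_union (Ioc_disjoint_Ioc_of_le le_rfl)
      measurableSet_Ioc (hfm.mono_set (Ioc_subset_Ioc_right hb₀a))
      (hfm.mono_set (Ioc_subset_Ioc_left hb₀))]
  linarith

end Moments

lemma tendsto_rpow_abs_setIntegral_Ioc_mul_pow {f : ℝ → ℝ} {a a₁ : ℝ} (ha : 0 < a)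
    (hf : IntegrableOn f (Ioc 0 a)) (ha₁ : a₁ < a) (hpos : ∀ r ∈ Ioc a₁ a, 0 ≤ f r)
    (hnontriv : ∀ b < a, 0 < ∫ r in Ioo b a, |f r|) :
    Tendsto (fun m : ℕ => |∫ r in Ioc 0 a, f r * r ^ m| ^ ((1 : ℝ) / m)) atTop (𝓝 a) := by
  refine tendsto_order.2 ⟨fun b' hb' => ?_, fun a' ha' => ?_⟩
  · obtain ⟨b₀, hb₀, hb₀a⟩ := exists_between (max_lt (max_lt ha₁ ha) hb')
    obtain ⟨b₁, hb, hb₁a⟩ := exists_between hb₀a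
    simp only [max_lt_iff] at hb₀
    obtain ⟨⟨ha₁b₀, hb₀pos⟩, hb'b₀⟩ := hb₀
    have hc : 0 < ∫ r in Ioc b₁ a, f r := by
      rw [← setIntegral_congr_fun measurableSet_Ioc
        fun r hr => abs_of_nonneg (hpos r ⟨ha₁b₀.trans (hb.trans hr.1), hr.2⟩),
        integral_Ioc_eq_integral_Ioo]
      exact hnontriv b₁ hb₁a
    refine eventually_lt_rpow_one_div (hb₀pos.trans hb).le (half_pos hc) (hb'b₀.trans hb) ?_
    filter_upwards [eventually_mul_pow_le_mul_pow hb₀pos.le hb (∫ r in Ioc 0 a, |f r|)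
      (half_pos hc)] with m hm
    have := pow_mul_sub_le_setIntegral_Ioc_mul_pow hf hb₀pos.le hb.le hb₁a.le
      (fun r hr => hpos r ⟨ha₁b₀.trans hr.1, hr.2⟩) m
    linarith [le_abs_self (∫ r in Ioc 0 a, f r * r ^ m)]
  · exact eventually_rpow_one_div_lt ha.le ha' (fun m => abs_nonneg _) fun m =>
      abs_setIntegral_mul_pow_le hf measurableSet_Ioc
        (fun r hr => (abs_of_pos hr.1).le.trans hr.2) m

/-- If `q ∈ L²(0,∞)` is real-valued, vanishes for `r > a` (where `a > 0` is the
radius of its support), does not change sign on some interval `(a₁, a]`, and is not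
a.e. zero on `(a−ε, a)` for any `ε > 0`, then
`a = lim_{m→∞} |∫₀^∞ q(r) rᵐ dr|^{1/m}`. -/
theorem stmt_15 (q : ℝ → ℝ) (a : ℝ) (ha : 0 < a)
    (hq : MemLp q 2 (volume.restrict (Set.Ioi 0)))
    (hsupp : ∀ r > a, q r = 0)
    (hsign : ∃ a₁ < a, (∀ r ∈ Set.Ioc a₁ a, 0 ≤ q r) ∨ (∀ r ∈ Set.Ioc a₁ a, q r ≤ 0))
    (hnontriv : ∀ ε > (0:ℝ), 0 < ∫ r in Set.Ioo (a - ε) a, |q r|) :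
    Tendsto (fun m : ℕ => |∫ r in Set.Ioi (0:ℝ), q r * r ^ m| ^ ((1:ℝ) / m))
      atTop (nhds a) := by
  have hint : IntegrableOn q (Ioc 0 a) :=
    (hq.mono_measure (Measure.restrict_mono Ioc_subset_Ioi_self le_rfl)).integrable one_le_two
  have hmoment (m : ℕ) : ∫ r in Ioi 0, q r * r ^ m = ∫ r in Ioc 0 a, q r * r ^ m :=
    setIntegral_eq_of_subset_of_forall_sdiff_eq_zero measurableSet_Ioi Ioc_subset_Ioi_self
      fun r hr => by rw [hsupp r (not_le.1 fun h => hr.2 ⟨hr.1, h⟩), zero_mul]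
  have hnontriv' (b : ℝ) (hb : b < a) : 0 < ∫ r in Ioo b a, |q r| := by
    simpa using hnontriv (a - b) (sub_pos.2 hb)
  simp_rw [hmoment]
  obtain ⟨a₁, ha₁, hpos | hneg⟩ := hsign
  · exact tendsto_rpow_abs_setIntegral_Ioc_mul_pow ha hint ha₁ hpos hnontriv'
  · simpa [integral_neg] using tendsto_rpow_abs_setIntegral_Ioc_mul_pow ha hint.neg ha₁
      (fun r hr => neg_nonneg.2 (hneg r hr)) (by simpa using hnontriv')
end
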